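/- Let a be a sequence in the class S and δ > 0. If A ⊆ ℕ satisfies d̄_a(A) > δ, then the set K = {k ∈ ℕ : d̄_a(A ∩ (A − k)) > δ²/2} has bounded gaps. -/

import Mathlib

open Filter Topology

/-- The weighted sum `∑_{j=0}^{N} a_j · 1_A(j)`. -/
noncomputable def wSum (a : ℕ → ℝ) (A : Set ℕ) (N : ℕ) : ℝ :=
  ∑ j ∈ Finset.range (N + 1), Set.indicator A a j

/-- The upper `a`-density `d̄_a(A)`. -/
noncomputable def upperDensWith (a : ℕ → ℝ) (A : Set ℕ) : ℝ :=
  Filter.limsup (fun N => wSum a A N / ∑ j ∈ Finset.range (N + 1), a j) Filter.atTop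

/-- The lower `a`-density `d_a(A)`. -/
noncomputable def lowerDensWith (a : ℕ → ℝ) (A : Set ℕ) : ℝ :=
  Filter.liminf (fun N => wSum a A N / ∑ j ∈ Finset.range (N + 1), a j) Filter.atTop

/-- The (unweighted) upper density `d̄(A)`. -/
noncomputable def upperDens (A : Set ℕ) : ℝ :=
  Filter.limsup
    (fun N : ℕ => (∑ j ∈ Finset.range (N + 1), Set.indicator A (fun _ => (1 : ℝ)) j) / (N + 1))
    Filter.atTop

/-- The upper Banach density `B̄d(A) = lim_N b_N / N`, `b_N = limsup_k #(A ∩ [k+1, k+N])`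
(the limit exists, so it coincides with the limsup used here). -/
noncomputable def upperBanachDens (A : Set ℕ) : ℝ :=
  Filter.limsup
    (fun N : ℕ =>
      (Filter.limsup
          (fun k : ℕ => ∑ j ∈ Finset.Icc (k + 1) (k + N), Set.indicator A (fun _ => (1 : ℝ)) j)
          Filter.atTop) / (N : ℝ))
    Filter.atTop

/-- `v_n(a) = a_n / ∑_{j=0}^{n-1} a_j`. -/
noncomputable def vSeq (a : ℕ → ℝ) (n : ℕ) : ℝ := a n / ∑ j ∈ Finset.range n, a j

/-- The class `S` of weights: positive non-decreasing sequences tending to `+∞` such that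
`(v_n(a))_{n ≥ 1}` is non-increasing and tends to `0`. -/
def memS (a : ℕ → ℝ) : Prop :=
  (∀ n, 0 < a n) ∧ Monotone a ∧ Filter.Tendsto a Filter.atTop Filter.atTop ∧
    (∀ m n : ℕ, 1 ≤ m → m ≤ n → vSeq a n ≤ vSeq a m) ∧
    Filter.Tendsto (vSeq a) Filter.atTop (nhds 0)

/-- `A - k = {n : n + k ∈ A}`. -/
def shiftSet (A : Set ℕ) (k : ℕ) : Set ℕ := {n : ℕ | n + k ∈ A}

/-- A set of natural numbers has bounded gaps (is syndetic). -/
def Syndetic (K : Set ℕ) : Prop := ∃ m : ℕ, ∀ n : ℕ, (K ∩ Set.Icc n (n + m)).Nonempty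

/-- The return set `N(x, U) = {n : T^n x ∈ U}`. -/
def retSet {X : Type*} [NormedAddCommGroup X] [NormedSpace ℂ X] (T : X →L[ℂ] X) (x : X)
    (U : Set X) : Set ℕ :=
  {n : ℕ | (T ^ n) x ∈ U}

/-- The set of hypercyclic vectors of `T`. -/
def HCSet {X : Type*} [NormedAddCommGroup X] [NormedSpace ℂ X] (T : X →L[ℂ] X) : Set X :=
  {x : X | Dense (Set.range fun n : ℕ => (T ^ n) x)}

/-- The set of `U`-frequently hypercyclic vectors of `T`. -/
def UFHCSet {X : Type*} [NormedAddCommGroup X] [NormedSpace ℂ X] (T : X →L[ℂ] X) : Set X :=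
  {x : X | ∀ U : Set X, IsOpen U → U.Nonempty → 0 < upperDens (retSet T x U)}

/-- The set of `U`-frequently hypercyclic vectors of `T` with respect to the weight `a`. -/
def UFHCaSet {X : Type*} [NormedAddCommGroup X] [NormedSpace ℂ X] (a : ℕ → ℝ)
    (T : X →L[ℂ] X) : Set X :=
  {x : X | ∀ U : Set X, IsOpen U → U.Nonempty → 0 < upperDensWith a (retSet T x U)}

/-- The set of reiteratively hypercyclic vectors of `T`. -/
def RHCSet {X : Type*} [NormedAddCommGroup X] [NormedSpace ℂ X] (T : X →L[ℂ] X) : Set X :=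
  {x : X | ∀ U : Set X, IsOpen U → U.Nonempty → 0 < upperBanachDens (retSet T x U)}

/-- `T` is `𝒜`-hypercyclic. -/
def AHC {X : Type*} [NormedAddCommGroup X] [NormedSpace ℂ X] (𝒜 : Set (Set ℕ))
    (T : X →L[ℂ] X) : Prop :=
  ∃ x : X, ∀ U : Set X, IsOpen U → U.Nonempty → retSet T x U ∈ 𝒜

/-- The `n`-fold product `T × ⋯ × T` acting diagonally on `Fin n → X`. -/
noncomputable def nfold {X : Type*} [NormedAddCommGroup X] [NormedSpace ℂ X] (T : X →L[ℂ] X)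
    (n : ℕ) : (Fin n → X) →L[ℂ] (Fin n → X) :=
  ContinuousLinearMap.pi fun i => T.comp (ContinuousLinearMap.proj i)

/-! If `K` had arbitrarily long gaps, there would be shifts `g 0 ≤ g 1 ≤ ⋯` all of whose
differences avoid `K`. Shifting a set by one changes its weighted counting ratio at time `N` by at
most `a (N + 1) / ∑_{j ≤ N} a j = v_{N+1}(a) → 0`, so at a time `N` where `A` has ratio above `δ`,
the `r = ⌈2/δ⌉` sets `A - g i` all have ratio almost `δ`, while their pairwise intersections, being
shifts of sets `A ∩ (A - (g j - g i))`, have ratio at most about `δ²/2`. The Bonferroni inequality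
`∑ᵢ 1_{Bᵢ} - ∑_{i<j} 1_{Bᵢ ∩ Bⱼ} ≤ 1` then forces `rδ - r(r-1)δ²/4 ≤ 1`, which fails for this `r`.
-/

open Finset

noncomputable def wRatio (a : ℕ → ℝ) (C : Set ℕ) (N : ℕ) : ℝ :=
  wSum a C N / ∑ j ∈ range (N + 1), a j

theorem upperDensWith_eq_limsup (a : ℕ → ℝ) (C : Set ℕ) :
    upperDensWith a C = limsup (wRatio a C) atTop :=
  rfl

theorem shiftSet_shiftSet (C : Set ℕ) (k l : ℕ) :
    shiftSet (shiftSet C k) l = shiftSet C (k + l) :=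
  Set.ext fun n => by simp only [shiftSet, Set.mem_ofPred_eq, add_assoc, add_comm l k]

theorem shiftSet_inter_shiftSet (C : Set ℕ) {k l : ℕ} (hkl : k ≤ l) :
    shiftSet C k ∩ shiftSet C l = shiftSet (C ∩ shiftSet C (l - k)) k :=
  Set.ext fun n => by
    simp only [shiftSet, Set.mem_inter_iff, Set.mem_ofPred_eq, add_assoc, Nat.add_sub_cancel' hkl]

section Weighted

variable {a : ℕ → ℝ}

section Bounds

variable (h0 : ∀ n, 0 ≤ a n)
include h0

theorem wSum_nonneg (C : Set ℕ) (N : ℕ) : 0 ≤ wSum a C N :=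
  sum_nonneg fun j _ => Set.indicator_nonneg (fun n _ => h0 n) j

theorem wSum_le_sum (C : Set ℕ) (N : ℕ) : wSum a C N ≤ ∑ j ∈ range (N + 1), a j :=
  sum_le_sum fun j _ => Set.indicator_le_self' (fun n _ => h0 n) j

theorem wRatio_nonneg (C : Set ℕ) (N : ℕ) : 0 ≤ wRatio a C N :=
  div_nonneg (wSum_nonneg h0 C N) (sum_nonneg fun j _ => h0 j)

theorem wRatio_le_one (C : Set ℕ) (N : ℕ) : wRatio a C N ≤ 1 :=
  div_le_one_of_le₀ (wSum_le_sum h0 C N) (sum_nonneg fun j _ => h0 j)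

theorem isBoundedUnder_le_wRatio (C : Set ℕ) : IsBoundedUnder (· ≤ ·) atTop (wRatio a C) :=
  isBoundedUnder_of ⟨1, wRatio_le_one h0 C⟩

theorem isCoboundedUnder_le_wRatio (C : Set ℕ) : IsCoboundedUnder (· ≤ ·) atTop (wRatio a C) :=
  (isBoundedUnder_of ⟨0, wRatio_nonneg h0 C⟩).isCoboundedUnder_le

theorem abs_wSum_shiftSet_one_sub_le (hmono : Monotone a) (C : Set ℕ) (N : ℕ) :
    |wSum a (shiftSet C 1) N - wSum a C N| ≤ a (N + 1) := by
  set D : ℕ → ℝ := fun n => C.indicator a (n + 1) - (shiftSet C 1).indicator a n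
  have hD : ∀ n, 0 ≤ D n ∧ D n ≤ a (n + 1) - a n := fun n => by
    have := hmono n.le_succ
    by_cases hn : n + 1 ∈ C
    · simp only [D, Set.indicator_of_mem hn, Set.indicator_of_mem (show n ∈ shiftSet C 1 from hn)]
      constructor <;> linarith
    · simp only [D, Set.indicator_of_notMem hn,
        Set.indicator_of_notMem (show n ∉ shiftSet C 1 from hn)]
      constructor <;> linarith
  have hsplit : wSum a C N + C.indicator a (N + 1) =
      C.indicator a 0 + wSum a (shiftSet C 1) N + ∑ n ∈ range (N + 1), D n := by
    simp only [wSum, D, sum_sub_distrib]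
    rw [← sum_range_succ, sum_range_succ']
    ring
  have hDsum : ∑ n ∈ range (N + 1), D n ≤ a (N + 1) - a 0 :=
    (sum_le_sum fun n _ => (hD n).2).trans_eq (sum_range_sub a (N + 1))
  have hDsum_nonneg : 0 ≤ ∑ n ∈ range (N + 1), D n := sum_nonneg fun n _ => (hD n).1
  have h0' := Set.indicator_nonneg (s := C) (fun n _ => h0 n)
  have h1' := Set.indicator_le_self' (s := C) (fun n _ => h0 n)
  rw [abs_sub_le_iff]
  constructor <;> linarith [h0' 0, h0' (N + 1), h1' 0, h1' (N + 1)]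

theorem sum_indicator_sub_half_sum_offDiag_le {ι : Type*} [DecidableEq ι] (B : ι → Set ℕ)
    (s : Finset ι) (j : ℕ) :
    ∑ i ∈ s, (B i).indicator a j - (∑ p ∈ s.offDiag, (B p.1 ∩ B p.2).indicator a j) / 2 ≤
      a j := by
  classical
  set T := s.filter fun i => j ∈ B i
  have hT : ∑ i ∈ s, (B i).indicator a j = #T * a j := by
    rw [sum_indicator_eq_sum_filter, sum_const, nsmul_eq_mul]
  have hTT : ∑ p ∈ s.offDiag, (B p.1 ∩ B p.2).indicator a j = #T.offDiag * a j := by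
    rw [sum_indicator_eq_sum_filter, sum_const, nsmul_eq_mul]
    congr 3
    ext p
    simp only [T, mem_filter, mem_offDiag, Set.mem_inter_iff]
    tauto
  have hcount : (#T : ℝ) - (#T.offDiag : ℝ) / 2 ≤ 1 := by
    rw [offDiag_card, Nat.cast_sub (Nat.le_mul_self _)]
    push_cast
    rcases Nat.lt_or_ge #T 2 with h | h
    · interval_cases #T <;> norm_num
    · have : (2 : ℝ) ≤ #T := by exact_mod_cast h
      nlinarith
  rw [hT, hTT]
  nlinarith [h0 j]

theorem wRatio_bonferroni {ι : Type*} [DecidableEq ι] (B : ι → Set ℕ) (s : Finset ι) (N : ℕ) :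
    ∑ i ∈ s, wRatio a (B i) N - (∑ p ∈ s.offDiag, wRatio a (B p.1 ∩ B p.2) N) / 2 ≤ 1 := by
  have hdiv : ∑ i ∈ s, wRatio a (B i) N - (∑ p ∈ s.offDiag, wRatio a (B p.1 ∩ B p.2) N) / 2 =
      (∑ i ∈ s, wSum a (B i) N - (∑ p ∈ s.offDiag, wSum a (B p.1 ∩ B p.2) N) / 2) /
        ∑ j ∈ range (N + 1), a j := by
    simp only [wRatio, ← sum_div]
    ring
  rw [hdiv]
  refine div_le_one_of_le₀ ?_ (sum_nonneg fun j _ => h0 j)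
  simp only [wSum]
  rw [sum_comm, sum_comm (s := s.offDiag), sum_div, ← sum_sub_distrib]
  exact sum_le_sum fun j _ => sum_indicator_sub_half_sum_offDiag_le h0 B s j

theorem card_mul_sub_le_one_of_wRatio_bounds {ι : Type*} [DecidableEq ι] (B : ι → Set ℕ)
    (s : Finset ι) (N : ℕ) {α β : ℝ} (hα : ∀ i ∈ s, α ≤ wRatio a (B i) N)
    (hβ : ∀ p ∈ s.offDiag, wRatio a (B p.1 ∩ B p.2) N ≤ β) :
    #s * α - (#s ^ 2 - #s) * β / 2 ≤ 1 := by
  have hsum : #s * α ≤ ∑ i ∈ s, wRatio a (B i) N := by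
    simpa only [nsmul_eq_mul] using card_nsmul_le_sum s _ α hα
  have hsum₂ : ∑ p ∈ s.offDiag, wRatio a (B p.1 ∩ B p.2) N ≤ (#s ^ 2 - #s) * β := by
    have := sum_le_card_nsmul _ _ β hβ
    rwa [offDiag_card, nsmul_eq_mul, Nat.cast_sub (Nat.le_mul_self _), Nat.cast_mul, ← sq]
      at this
  linarith [wRatio_bonferroni h0 B s N]

end Bounds

section Shift

variable (h0 : ∀ n, 0 ≤ a n) (hmono : Monotone a) (hv : Tendsto (vSeq a) atTop (𝓝 0))
include h0 hmono hv

theorem tendsto_wRatio_shiftSet_sub (C : Set ℕ) (k : ℕ) :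
    Tendsto (fun N => wRatio a (shiftSet C k) N - wRatio a C N) atTop (𝓝 0) := by
  induction k with
  | zero => simp [shiftSet]
  | succ k ih =>
    have hstep : Tendsto (fun N => wRatio a (shiftSet (shiftSet C k) 1) N -
        wRatio a (shiftSet C k) N) atTop (𝓝 0) := by
      refine squeeze_zero_norm (fun N => ?_) (hv.comp (tendsto_add_atTop_nat 1))
      rw [wRatio, wRatio, ← sub_div, Real.norm_eq_abs, abs_div,
        abs_of_nonneg (sum_nonneg fun j _ => h0 j)]
      exact div_le_div_of_nonneg_right (abs_wSum_shiftSet_one_sub_le h0 hmono _ N)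
        (sum_nonneg fun j _ => h0 j)
    rw [shiftSet_shiftSet] at hstep
    simpa only [sub_add_sub_cancel, add_zero] using hstep.add ih

theorem eventually_wRatio_shiftSet_lt {C : Set ℕ} {c : ℝ} (hC : upperDensWith a C < c) (k : ℕ) :
    ∀ᶠ N in atTop, wRatio a (shiftSet C k) N < c := by
  obtain ⟨c', hCc', hc'c⟩ := exists_between hC
  rw [upperDensWith_eq_limsup] at hCc'
  filter_upwards [eventually_lt_of_limsup_lt hCc' (isBoundedUnder_le_wRatio h0 C),
    (tendsto_wRatio_shiftSet_sub h0 hmono hv C k).eventually (gt_mem_nhds (sub_pos.2 hc'c))]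
    with N hN hdiff
  linarith

theorem eventually_forall_sub_lt_wRatio_shiftSet {ι : Type*} (C : Set ℕ) (k : ι → ℕ) {ε : ℝ}
    (hε : 0 < ε) (s : Finset ι) :
    ∀ᶠ N in atTop, ∀ i ∈ s, wRatio a C N - ε < wRatio a (shiftSet C (k i)) N :=
  (eventually_all_finset s).2 fun i _ =>
    ((tendsto_wRatio_shiftSet_sub h0 hmono hv C (k i)).eventually
      (lt_mem_nhds (neg_neg_of_pos hε))).mono fun N hN => by linarith

theorem eventually_forall_offDiag_wRatio_shiftSet_inter_lt {C : Set ℕ} {k : ℕ → ℕ}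
    (hk : Monotone k) {c : ℝ} (hc : ∀ i j, i < j → upperDensWith a (C ∩ shiftSet C (k j - k i)) < c)
    (s : Finset ℕ) :
    ∀ᶠ N in atTop, ∀ p ∈ s.offDiag, wRatio a (shiftSet C (k p.1) ∩ shiftSet C (k p.2)) N < c := by
  have hlt : ∀ i j, i < j → ∀ᶠ N in atTop, wRatio a (shiftSet C (k i) ∩ shiftSet C (k j)) N < c :=
    fun i j hij => by
      rw [shiftSet_inter_shiftSet C (hk hij.le)]
      exact eventually_wRatio_shiftSet_lt h0 hmono hv (hc i j hij) _
  refine (eventually_all_finset _).2 fun p hp => ?_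
  rcases lt_or_gt_of_ne (mem_offDiag.1 hp).2.2 with h | h
  · exact hlt _ _ h
  · simpa only [Set.inter_comm] using hlt _ _ h

end Shift

end Weighted

theorem exists_monotone_sub_notMem_of_not_syndetic {K : Set ℕ} (hK : ¬ Syndetic K) :
    ∃ g : ℕ → ℕ, Monotone g ∧ ∀ i j, i < j → g j - g i ∉ K := by
  have hgap : ∀ m, ∃ n, ∀ x ∈ Set.Icc n (n + m), x ∉ K := fun m => by
    by_contra! h
    exact hK ⟨m, fun n => (h n).elim fun x ⟨hx, hxK⟩ => ⟨x, hxK, hx⟩⟩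
  choose F hF using hgap
  -- each `g (t + 1) - g i` with `i ≤ t` lands in the gap `[F (g t), F (g t) + g t]`
  let g : ℕ → ℕ := fun t => Nat.rec 0 (fun _ prev => F prev + prev) t
  have hg : ∀ t, g (t + 1) = F (g t) + g t := fun _ => rfl
  have hgmono : Monotone g := monotone_nat_of_le_succ fun t => by rw [hg]; omega
  refine ⟨g, hgmono, fun i j hij => ?_⟩
  obtain ⟨t, rfl⟩ : ∃ t, j = t + 1 := ⟨j - 1, by omega⟩
  have := hgmono (Nat.le_of_lt_succ hij)
  exact hF (g t) _ ⟨by rw [hg]; omega, by rw [hg]; omega⟩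

theorem exists_nat_one_lt_bonferroni_bound {δ : ℝ} (hδ : 0 < δ) :
    ∃ r : ℕ, ∃ ε > 0, 1 < r * (δ - ε) - (r ^ 2 - r) * (δ ^ 2 / 2 + ε) / 2 := by
  set r := ⌈2 / δ⌉₊
  have hr₁ : 2 ≤ r * δ := (div_le_iff₀ hδ).1 (Nat.le_ceil _)
  have hr₂ : r * δ < 2 + δ := by
    have := mul_lt_mul_of_pos_right (Nat.ceil_lt_add_one (div_nonneg zero_le_two hδ.le)) hδ
    rwa [add_mul, div_mul_cancel₀ _ hδ.ne', one_mul] at this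
  set m : ℝ := r * δ - (r ^ 2 - r) * δ ^ 2 / 4 - 1 with hm_def
  have hm : 0 < m := by
    have : m = ((r * δ - 2) * (2 + δ - r * δ) + 2 * δ) / 4 := by rw [hm_def]; ring
    rw [this]
    nlinarith [mul_nonneg (sub_nonneg.2 hr₁) (sub_nonneg.2 hr₂.le)]
  refine ⟨r, m / (r ^ 2 + 1), by positivity, ?_⟩
  have hε : (r ^ 2 + r) / 2 * (m / (r ^ 2 + 1)) < m := by
    rw [← mul_div_assoc, div_lt_iff₀ (by positivity)]
    nlinarith [sq_nonneg ((r : ℝ) - 1)]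
  linarith [hm_def]

/-- If `d̄_a(A) > δ > 0` with `a ∈ S`, then `{k : d̄_a(A ∩ (A - k)) > δ²/2}` has bounded gaps. -/
theorem stmt_13 (a : ℕ → ℝ) (ha : memS a) (δ : ℝ) (hδ : 0 < δ) (A : Set ℕ)
    (hA : δ < upperDensWith a A) :
    Syndetic {k : ℕ | δ ^ 2 / 2 < upperDensWith a (A ∩ shiftSet A k)} := by
  obtain ⟨hpos, hmono, -, -, hv⟩ := ha
  have h0 : ∀ n, 0 ≤ a n := fun n => (hpos n).le
  by_contra hK
  obtain ⟨g, hg, hgK⟩ := exists_monotone_sub_notMem_of_not_syndetic hK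
  obtain ⟨r, ε, hε, hrε⟩ := exists_nat_one_lt_bonferroni_bound hδ
  have hpair : ∀ i j, i < j → upperDensWith a (A ∩ shiftSet A (g j - g i)) < δ ^ 2 / 2 + ε :=
    fun i j hij => (not_lt.1 (hgK i j hij)).trans_lt (lt_add_of_pos_right _ hε)
  obtain ⟨N, hAN, hshift, hinter⟩ := ((frequently_lt_of_lt_limsup
    (isCoboundedUnder_le_wRatio h0 A) hA).and_eventually
    ((eventually_forall_sub_lt_wRatio_shiftSet h0 hmono hv A g hε (range r)).and
      (eventually_forall_offDiag_wRatio_shiftSet_inter_lt h0 hmono hv hg hpair (range r)))).exists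
  have hbonf := card_mul_sub_le_one_of_wRatio_bounds h0 (fun i => shiftSet A (g i)) (range r) N
    (α := δ - ε) (fun i hi => by linarith [hshift i hi]) (fun p hp => (hinter p hp).le)
  rw [card_range] at hbonf
  linarith
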